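/- arXiv:cond-mat/9503017 — 2 statements merged into one kernel-verified Lean document; each statement's English description precedes it below -/
import Mathlib

section
/- The subgroup H₁ of ℤ⁴⁰ generated by the 20 vectors R^α v₁, R^α v₂ (α = 0, …, 9) is free abelian of rank 20, and the quotient ℤ⁴⁰ / H₁ is a free abelian group of rank 20 (this quotient carries the natural basis given by the 20 oriented pattern classes of Penrose rhombi). -/
/-!
`R` rotates each of the four blocks of ten coordinates cyclically, so `R^α v₁` and `R^α v₂` are
differences `e_s - e_t` of basis vectors, and the 20 pairs `(s, t)` so obtained partition the 40
coordinates. In coordinates adapted to such a partition, `H₁` is the antidiagonal `{(c, -c)}` of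
`ℤ²⁰ × ℤ²⁰`, which is free of rank 20 and is the kernel of the surjection `(a, b) ↦ a + b` onto `ℤ²⁰`.
-/

/-- The 10×10 cyclic-shift permutation matrix `ω`, with `ω α β = 1` iff `β ≡ α + 1 (mod 10)`. -/
def omegaMat : Matrix (Fin 10) (Fin 10) ℤ :=
  Matrix.of fun α β => if β = α + 1 then 1 else 0

/-- The block-diagonal rotation matrix `R = diag(ω, ω, ω, ω) ∈ M₄₀(ℤ)`. -/
def Rmat : Matrix (Fin 40) (Fin 40) ℤ :=
  Matrix.of fun i j =>
    if i.val / 10 = j.val / 10 then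
      omegaMat ⟨i.val % 10, by omega⟩ ⟨j.val % 10, by omega⟩
    else 0

/-- The 4×4 array of 10×10 blocks of the Penrose triangle substitution matrix:
rows of blocks `(ω⁴, ω⁰, 0, ω⁶)`, `(ω⁰, ω⁶, ω⁴, 0)`, `(ω³, 0, ω⁷, 0)`, `(0, ω⁷, 0, ω³)`. -/
def penroseBlocks : Fin 4 → Fin 4 → Matrix (Fin 10) (Fin 10) ℤ :=
  ![![omegaMat ^ 4, omegaMat ^ 0, 0, omegaMat ^ 6],
    ![omegaMat ^ 0, omegaMat ^ 6, omegaMat ^ 4, 0],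
    ![omegaMat ^ 3, 0, omegaMat ^ 7, 0],
    ![0, omegaMat ^ 7, 0, omegaMat ^ 3]]

/-- The Penrose triangle substitution matrix `σ̌ ∈ M₄₀(ℤ)`. -/
def sigmaCheck : Matrix (Fin 40) (Fin 40) ℤ :=
  Matrix.of fun i j =>
    penroseBlocks ⟨i.val / 10, by omega⟩ ⟨j.val / 10, by omega⟩
      ⟨i.val % 10, by omega⟩ ⟨j.val % 10, by omega⟩

/-- The standard basis vectors of `ℤ⁴⁰`, numbered `1`-based: `stdVec i = e_{i+1}`. -/
def stdVec (i : Fin 40) : Fin 40 → ℤ := Pi.single i 1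

/-- `v₁ = e₂₇ − e₃₂`. -/
def pv1 : Fin 40 → ℤ := stdVec 26 - stdVec 31
/-- `v₂ = e₇ − e₁₂`. -/
def pv2 : Fin 40 → ℤ := stdVec 6 - stdVec 11
/-- `w₁ = e₈ − e₁₁ + e₂₉ − e₄₀`. -/
def pw1 : Fin 40 → ℤ := stdVec 7 - stdVec 10 + stdVec 28 - stdVec 39
/-- `w₂ = e₆ − e₁₃ − e₃₀ + e₃₉`. -/
def pw2 : Fin 40 → ℤ := stdVec 5 - stdVec 12 - stdVec 29 + stdVec 38

/-- The subgroup `G ⊆ ℤ⁴⁰` generated by the 40 vectors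
`R^α v₁, R^α v₂, R^α w₁, R^α w₂`, `α = 0, …, 9` (matrices acting on column vectors). -/
def Gsub : AddSubgroup (Fin 40 → ℤ) :=
  AddSubgroup.closure
    {x | ∃ α : Fin 10,
      x = (Rmat ^ (α : ℕ)).mulVec pv1 ∨ x = (Rmat ^ (α : ℕ)).mulVec pv2 ∨
      x = (Rmat ^ (α : ℕ)).mulVec pw1 ∨ x = (Rmat ^ (α : ℕ)).mulVec pw2}

/-- The subgroup `H₁ ⊆ ℤ⁴⁰` generated by the 20 vectors `R^α v₁, R^α v₂`, `α = 0, …, 9`. -/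
def H1sub : AddSubgroup (Fin 40 → ℤ) :=
  AddSubgroup.closure
    {x | ∃ α : Fin 10,
      x = (Rmat ^ (α : ℕ)).mulVec pv1 ∨ x = (Rmat ^ (α : ℕ)).mulVec pv2}

open Function Set
open scoped Matrix

section PairedCoordinates

variable {κ ι : Type*} (e : κ ⊕ κ ≃ ι)

def pairDiffCombination : (κ → ℤ) →+ (ι → ℤ) where
  toFun c i := Sum.elim c (-c) (e.symm i)
  map_zero' := by ext i; rcases e.symm i with k | k <;> rfl
  map_add' c d := by
    ext i; simp only [Pi.add_apply]; rcases e.symm i with k | k <;> simp [add_comm]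

def pairSum : (ι → ℤ) →+ (κ → ℤ) where
  toFun x k := x (e (.inl k)) + x (e (.inr k))
  map_zero' := by ext; simp
  map_add' x y := by ext; simp only [Pi.add_apply]; ring

@[simp] lemma pairDiffCombination_apply_inl (c : κ → ℤ) (k : κ) :
    pairDiffCombination e c (e (.inl k)) = c k := by
  simp [pairDiffCombination]

@[simp] lemma pairDiffCombination_apply_inr (c : κ → ℤ) (k : κ) :
    pairDiffCombination e c (e (.inr k)) = -c k := by
  simp [pairDiffCombination]

lemma pairDiffCombination_injective : Injective (pairDiffCombination e) :=
  fun c d h => funext fun k => by simpa using congr_fun h (e (.inl k))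

lemma ker_pairSum : (pairSum e).ker = (pairDiffCombination e).range := by
  apply le_antisymm
  · intro x hx
    refine ⟨fun k => x (e (.inl k)), funext fun i => ?_⟩
    obtain ⟨k | k, rfl⟩ := e.surjective i
    · simp
    · simpa [pairSum, neg_eq_iff_add_eq_zero, add_comm] using congr_fun hx k
  · rintro _ ⟨c, rfl⟩
    ext k
    simp [pairSum]

lemma pairSum_surjective : Surjective (pairSum e) :=
  fun b => ⟨fun i => Sum.elim 0 b (e.symm i), by ext; simp [pairSum]⟩

variable [DecidableEq ι]

def pairDiff (k : κ) : ι → ℤ := Pi.single (e (.inl k)) 1 - Pi.single (e (.inr k)) 1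

lemma pairDiffCombination_single [DecidableEq κ] (k : κ) :
    pairDiffCombination e (Pi.single k 1) = pairDiff e k := by
  ext i
  obtain ⟨m | m, rfl⟩ := e.surjective i <;> simp [pairDiff, Pi.single_apply]

variable [Fintype κ]

lemma range_pairDiffCombination :
    (pairDiffCombination e).range = AddSubgroup.closure (range (pairDiff e)) := by
  classical
  apply le_antisymm
  · rintro _ ⟨c, rfl⟩
    rw [← Finset.univ_sum_single c, map_sum]
    refine AddSubgroup.sum_mem _ fun k _ => ?_
    rw [← mul_one (c k), ← smul_eq_mul, Pi.single_smul', map_zsmul, pairDiffCombination_single]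
    exact AddSubgroup.zsmul_mem _ (AddSubgroup.subset_closure (mem_range_self k)) _
  · rw [AddSubgroup.closure_le]
    rintro _ ⟨k, rfl⟩
    exact ⟨Pi.single k 1, pairDiffCombination_single e k⟩

noncomputable def closurePairDiffEquiv :
    AddSubgroup.closure (range (pairDiff e)) ≃+ (κ → ℤ) :=
  (AddEquiv.addSubgroupCongr (range_pairDiffCombination e).symm).trans
    (AddMonoidHom.ofInjective (pairDiffCombination_injective e)).symm

noncomputable def quotientClosurePairDiffEquiv :
    ((ι → ℤ) ⧸ AddSubgroup.closure (range (pairDiff e))) ≃+ (κ → ℤ) :=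
  (QuotientAddGroup.quotientAddEquivOfEq
      ((ker_pairSum e).trans (range_pairDiffCombination e)).symm).trans
    (QuotientAddGroup.quotientKerEquivOfSurjective _ (pairSum_surjective e))

end PairedCoordinates

lemma Matrix.of_ite_eq_mulVec {n R : Type*} [Fintype n] [DecidableEq n] [NonAssocSemiring R]
    (f : n → n) (x : n → R) :
    (Matrix.of fun i j => if j = f i then (1 : R) else 0) *ᵥ x = x ∘ f := by
  ext i
  simp [Matrix.mulVec, dotProduct, ite_mul]

lemma Matrix.pow_mulVec_of_mulVec_eq_comp {n R : Type*} [Fintype n] [DecidableEq n] [Semiring R]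
    {M : Matrix n n R} {f : n → n} (hM : ∀ x, M *ᵥ x = x ∘ f) (m : ℕ) (x : n → R) :
    (M ^ m) *ᵥ x = x ∘ f^[m] := by
  induction m with
  | zero => simp
  | succ m ih => rw [pow_succ', ← Matrix.mulVec_mulVec, ih, hM, iterate_succ, comp_assoc]

def rotate (i : Fin 40) : Fin 40 := ⟨i / 10 * 10 + (i % 10 + 1) % 10, by omega⟩

lemma Rmat_eq_of_rotate : Rmat = Matrix.of fun i j => if j = rotate i then 1 else 0 := by
  decide

lemma Rmat_pow_mulVec (m : ℕ) (x : Fin 40 → ℤ) : (Rmat ^ m) *ᵥ x = x ∘ rotate^[m] :=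
  Matrix.pow_mulVec_of_mulVec_eq_comp
    (fun x => Rmat_eq_of_rotate ▸ Matrix.of_ite_eq_mulVec rotate x) m x

def blockIdx (b : Fin 4) (a : Fin 10) : Fin 40 := ⟨10 * b + a, by omega⟩

/-- `R^α v₁ = e_{2,6-α} - e_{3,1-α}` and `R^α v₂ = e_{0,6-α} - e_{1,1-α}`, where
`e_{b,a} = stdVec (blockIdx b a)`; these 20 pairs partition the 40 coordinates. -/
noncomputable def rhombusPairing : (Fin 10 ⊕ Fin 10) ⊕ (Fin 10 ⊕ Fin 10) ≃ Fin 40 :=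
  Equiv.ofBijective
    (Sum.elim (Sum.elim (fun α => blockIdx 2 (6 - α)) (fun α => blockIdx 0 (6 - α)))
      (Sum.elim (fun α => blockIdx 3 (1 - α)) (fun α => blockIdx 1 (1 - α))))
    (by decide)

lemma Rmat_pow_mulVec_pv1 (α : Fin 10) :
    (Rmat ^ (α : ℕ)) *ᵥ pv1 = pairDiff rhombusPairing (.inl α) := by
  rw [Rmat_pow_mulVec]; revert α; decide

lemma Rmat_pow_mulVec_pv2 (α : Fin 10) :
    (Rmat ^ (α : ℕ)) *ᵥ pv2 = pairDiff rhombusPairing (.inr α) := by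
  rw [Rmat_pow_mulVec]; revert α; decide

lemma H1sub_eq_closure_pairDiff :
    H1sub = AddSubgroup.closure (range (pairDiff rhombusPairing)) := by
  rw [H1sub]
  congr 1
  ext x
  simp [Rmat_pow_mulVec_pv1, Rmat_pow_mulVec_pv2, Sum.exists, exists_or, eq_comm]

/-- The subgroup `H₁ ⊆ ℤ⁴⁰` generated by the 20 vectors
`R^α v₁, R^α v₂` (`α = 0, …, 9`) is free abelian of rank 20, and the quotient
`ℤ⁴⁰ / H₁` is a free abelian group of rank 20 (with natural basis the 20 oriented
pattern classes of Penrose rhombi). -/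
theorem H1sub_free_rank_20_and_quotient_free_rank_20 :
    Nonempty (↥H1sub ≃+ (Fin 20 → ℤ)) ∧
      Nonempty (((Fin 40 → ℤ) ⧸ H1sub) ≃+ (Fin 20 → ℤ)) := by
  let relabel : (Fin 10 ⊕ Fin 10 → ℤ) ≃+ (Fin 20 → ℤ) :=
    (LinearEquiv.funCongrLeft ℤ ℤ finSumFinEquiv.symm).toAddEquiv
  exact ⟨⟨(AddEquiv.addSubgroupCongr H1sub_eq_closure_pairDiff).trans
      ((closurePairDiffEquiv _).trans relabel)⟩,
    ⟨(QuotientAddGroup.quotientAddEquivOfEq H1sub_eq_closure_pairDiff).trans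
      ((quotientClosurePairDiffEquiv _).trans relabel)⟩⟩
end

section
/- The restriction of σ̌₀ to its image is an automorphism of the image: for the ℤ-linear map A : ℤ²⁰ → ℤ²⁰, x ↦ σ̌₀ x, the range of A² equals the range of A (so A maps range A onto itself), and A is injective on range A (range A ∩ ker A = 0). Consequently, by the direct-limit lemma, the direct limit of the system ℤ²⁰ → ℤ²⁰ → ⋯ with all maps equal to A is isomorphic to ℤ²⁰ / ker σ̌₀. -/
/-!
The integer matrix `D = sigma0InvOnRange` commutes with `σ̌₀` and satisfies `σ̌₀ D σ̌₀ = σ̌₀`, so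
it inverts `σ̌₀` on its range; in particular `σ̌₀² D = D σ̌₀² = σ̌₀`. The first identity gives
`range σ̌₀² = range σ̌₀`, the second `range σ̌₀ ∩ ker σ̌₀ = 0`. For any endomorphism `f` with these
two properties, `range fⁿ = range f` and `ker fⁿ = ker f` for `n ≥ 1`, so the canonical map from the
zeroth term into the direct limit of `M --f--> M --f--> ⋯` is onto with kernel `ker f`.
-/

/-- For each row `i` (numbered `1`–`20`), the list of columns (numbered `1`–`20`) where the
Penrose rhombus substitution matrix `σ̌₀` has entry `1`; all other entries are `0`. -/
def sigma0Cols : Fin 20 → List ℕ :=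
  ![[6, 7], [6, 7], [8, 12, 14], [8, 9, 13], [1, 9, 10],
    [1, 10, 15, 17], [2, 3, 16, 18], [2, 3, 4], [4, 5, 20], [5, 11, 19],
    [14], [19], [6], [1, 17], [8, 12, 18],
    [3, 9, 13], [4, 10, 20], [5, 11, 15], [2, 16], [7]]

/-- The substitution matrix `σ̌₀ ∈ M₂₀(ℤ)` of the Penrose rhombus substitution `ρ̌₀`. -/
def sigma0 : Matrix (Fin 20) (Fin 20) ℤ :=
  Matrix.of fun i j => if (j.val + 1) ∈ sigma0Cols i then 1 else 0

theorem Matrix.mulVecLin_pow {n R : Type*} [Fintype n] [DecidableEq n] [CommSemiring R]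
    (A : Matrix n n R) (k : ℕ) : (A ^ k).mulVecLin = A.mulVecLin ^ k := by
  simpa only [Matrix.toLin'_apply'] using Matrix.toLin'_pow A k

namespace Module.End

open LinearMap

variable {R M : Type*} [Ring R] [AddCommGroup M] [Module R M] (f : Module.End R M)

theorem range_sq_eq_range_of_sq_mul_eq {d : Module.End R M} (h : f ^ 2 * d = f) :
    range (f ^ 2) = range f := by
  refine le_antisymm ?_ ?_
  · rw [pow_two, mul_eq_comp]
    exact range_comp_le_range f f
  · conv_lhs => rw [← h, mul_eq_comp]
    exact range_comp_le_range d (f ^ 2)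

theorem range_inf_ker_eq_bot_of_mul_sq_eq {d : Module.End R M} (h : d * f ^ 2 = f) :
    range f ⊓ ker f = ⊥ := by
  refine eq_bot_iff.mpr fun x hx => ?_
  obtain ⟨⟨y, rfl⟩, hfy⟩ := Submodule.mem_inf.mp hx
  rw [mem_ker] at hfy
  rw [Submodule.mem_bot, ← h, mul_apply, pow_two, mul_apply, hfy, map_zero]

variable {f}

theorem range_pow_eq_range (h : range (f ^ 2) = range f) {n : ℕ} (hn : 1 ≤ n) :
    range (f ^ n) = range f := by
  induction n, hn using Nat.le_induction with
  | base => rw [pow_one]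
  | succ n _ ih => rw [pow_succ', mul_eq_comp, range_comp, ih, ← range_comp, ← mul_eq_comp,
      ← pow_two, h]

theorem ker_pow_eq_ker (h : range f ⊓ ker f = ⊥) {n : ℕ} (hn : 1 ≤ n) :
    ker (f ^ n) = ker f := by
  induction n, hn using Nat.le_induction with
  | base => rw [pow_one]
  | succ n _ ih =>
    refine le_antisymm (fun x hx => ?_) ((ker_le_ker_comp f (f ^ n)).trans_eq ?_)
    · have hfx : f x ∈ ker f := by
        rw [← ih, mem_ker, ← mul_apply, ← pow_succ]
        exact hx
      have : f x ∈ range f ⊓ ker f := ⟨mem_range_self f x, hfx⟩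
      rwa [h, Submodule.mem_bot] at this
    · rw [← mul_eq_comp, ← pow_succ]

variable (f)

instance directedSystem_pow :
    DirectedSystem (fun _ : ℕ => M) (fun i j (_ : i ≤ j) => ⇑(f ^ (j - i))) where
  map_self i x := by rw [Nat.sub_self, pow_zero, one_apply]
  map_map {i j k} hij hjk x := by rw [← mul_apply, ← pow_add, Nat.sub_add_sub_cancel hjk hij]

abbrev PowDirectLimit : Type _ :=
  Module.DirectLimit (ι := ℕ) (fun _ : ℕ => M) (fun i j (_ : i ≤ j) => f ^ (j - i))

noncomputable abbrev powDirectLimitOf (i : ℕ) : M →ₗ[R] PowDirectLimit f :=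
  Module.DirectLimit.of R ℕ (fun _ : ℕ => M) (fun i j (_ : i ≤ j) => f ^ (j - i)) i

theorem powDirectLimitOf_apply_of_le {i j : ℕ} (hij : i ≤ j) (x : M) :
    powDirectLimitOf f j ((f ^ (j - i)) x) = powDirectLimitOf f i x :=
  Module.DirectLimit.of_f (hij := hij)

variable {f}

theorem surjective_powDirectLimitOf_zero (h : range (f ^ 2) = range f) :
    Function.Surjective (powDirectLimitOf f 0) := by
  intro z
  obtain ⟨i, x, rfl⟩ := Module.DirectLimit.exists_of z
  obtain ⟨y, hy⟩ : f x ∈ range (f ^ (i + 1)) := by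
    rw [range_pow_eq_range h (Nat.le_add_left 1 i)]
    exact mem_range_self f x
  refine ⟨y, ?_⟩
  -- both sides equal `of (i + 1) (f x)`
  rw [← powDirectLimitOf_apply_of_le f (Nat.zero_le (i + 1)), Nat.sub_zero, hy,
    ← powDirectLimitOf_apply_of_le f (Nat.le_add_right i 1), Nat.add_sub_cancel_left, pow_one]

theorem ker_powDirectLimitOf_zero (h : range f ⊓ ker f = ⊥) :
    ker (powDirectLimitOf f 0) = ker f := by
  ext x
  rw [mem_ker, mem_ker]
  constructor
  · intro hx
    obtain ⟨j, -, hjx⟩ := Module.DirectLimit.of.zero_exact hx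
    rw [Nat.sub_zero] at hjx
    rcases Nat.eq_zero_or_pos j with rfl | hj
    · rw [pow_zero, one_apply] at hjx
      rw [hjx, map_zero]
    · rw [← mem_ker, ← ker_pow_eq_ker h hj]
      exact hjx
  · intro hx
    rw [← powDirectLimitOf_apply_of_le f (Nat.zero_le 1), Nat.sub_zero, pow_one, hx, map_zero]

noncomputable def powDirectLimitEquivQuotKer (h₁ : range (f ^ 2) = range f)
    (h₂ : range f ⊓ ker f = ⊥) : PowDirectLimit f ≃ₗ[R] M ⧸ ker f :=
  ((powDirectLimitOf f 0).quotKerEquivOfSurjective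
      (surjective_powDirectLimitOf_zero h₁)).symm.trans
    (Submodule.quotEquivOfEq _ _ (ker_powDirectLimitOf_zero h₂))

end Module.End

def sigma0InvOnRange : Matrix (Fin 20) (Fin 20) ℤ :=
!![1, -1, 0, 0, 1, 0, 0, 1, 0, 0, 0, 0, 0, 0, 0, -1, -1, 0, 0, 0;
 -1, 1, 0, 0, 1, 0, 0, 1, 0, 0, 0, 0, 0, 0, 0, -1, -1, 0, 0, 0;
 0, 0, 1, 0, 0, 0, 1, 0, 0, 0, -1, 0, 0, 0, -1, 0, 0, 0, -1, 0;
 1, -1, -1, 0, -1, 0, -1, 0, 0, 0, 1, 0, 0, 0, 1, 1, 1, 0, 1, 0;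
 0, 0, 0, 0, 0, 1, 0, 0, 1, 1, 0, -1, 0, -1, 0, 0, -1, -1, 0, 0;
 0, 1, 0, 0, 0, 0, 0, 0, 0, 0, 0, 0, 0, 0, 0, 0, 0, 0, 0, -1;
 1, 0, 0, 0, 0, 0, 0, 0, 0, 0, 0, 0, -1, 0, 0, 0, 0, 0, 0, 0;
 0, 0, 1, 1, 0, 0, 1, 0, 0, 0, -1, 0, 0, 0, -1, -1, 0, 0, -1, 0;
 -1, 1, 0, 0, 0, -1, 0, -1, 0, -1, 0, 1, 0, 1, 0, 1, 1, 1, 0, 0;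
 0, 0, 0, 0, 0, 1, 0, 0, 0, 1, 0, -1, 0, -1, 0, 0, 0, -1, 0, 0;
 0, 0, 0, 0, 0, -1, 0, 0, -1, 0, 0, 0, 0, 1, 0, 0, 1, 1, 0, 0;
 0, 0, 0, -1, 0, 0, -1, 0, 0, 0, 0, 0, 0, 0, 1, 1, 0, 0, 1, 0;
 0, -1, -1, 0, 0, 1, -1, 1, 0, 1, 1, -1, 1, -1, 1, 0, -1, -1, 1, 1;
 0, 0, 0, 0, 0, 0, 0, 0, 0, 0, 1, 0, 0, 0, 0, 0, 0, 0, 0, 0;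
 0, 0, 0, 0, 0, 0, 0, 0, 0, -1, 0, 1, 0, 0, 0, 0, 0, 1, 0, 0;
 1, -1, 0, 0, -1, 0, 0, -1, 0, 0, 0, 0, 0, 0, 0, 1, 1, 0, 1, 0;
 -1, 1, 0, 0, -1, 0, 0, -1, 0, 0, 0, 0, 0, 1, 0, 1, 1, 0, 0, 0;
 0, 0, -1, 0, 0, 0, 0, 0, 0, 0, 1, 0, 0, 0, 1, 0, 0, 0, 0, 0;
 0, 0, 0, 0, 0, 0, 0, 0, 0, 0, 0, 1, 0, 0, 0, 0, 0, 0, 0, 0;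
 -1, 0, 1, 0, 1, -1, 1, 0, 0, -1, -1, 1, 1, 1, -1, -1, 0, 1, -1, 1]

set_option maxHeartbeats 4000000 in
theorem sigma0_sq_mul_sigma0InvOnRange : sigma0 ^ 2 * sigma0InvOnRange = sigma0 := by
  decide

set_option maxHeartbeats 4000000 in
theorem sigma0InvOnRange_mul_sigma0_sq : sigma0InvOnRange * sigma0 ^ 2 = sigma0 := by
  decide

/-- For `A : ℤ²⁰ → ℤ²⁰`, `x ↦ σ̌₀ x`: the range of `A²` equals the range
of `A` (so `A` maps its range onto itself), `A` is injective on its range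
(`range A ⊓ ker A = ⊥`), and consequently the direct limit of the constant system
`ℤ²⁰ → ℤ²⁰ → ⋯` with all connecting maps equal to `A` is isomorphic to `ℤ²⁰ / ker σ̌₀`. -/
theorem sigma0_restriction_automorphism_and_directLimit :
    LinearMap.range ((sigma0 ^ 2).mulVecLin) = LinearMap.range sigma0.mulVecLin ∧
      LinearMap.range sigma0.mulVecLin ⊓ LinearMap.ker sigma0.mulVecLin = ⊥ ∧
      Nonempty
        ((Module.DirectLimit (ι := ℕ) (fun _ : ℕ => Fin 20 → ℤ)
            (fun i j (_ : i ≤ j) => sigma0.mulVecLin ^ (j - i))) ≃+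
          ((Fin 20 → ℤ) ⧸ LinearMap.ker sigma0.mulVecLin)) := by
  have h₁ : sigma0.mulVecLin ^ 2 * sigma0InvOnRange.mulVecLin = sigma0.mulVecLin := by
    rw [← Matrix.mulVecLin_pow, Module.End.mul_eq_comp, ← Matrix.mulVecLin_mul,
      sigma0_sq_mul_sigma0InvOnRange]
  have h₂ : sigma0InvOnRange.mulVecLin * sigma0.mulVecLin ^ 2 = sigma0.mulVecLin := by
    rw [← Matrix.mulVecLin_pow, Module.End.mul_eq_comp, ← Matrix.mulVecLin_mul,
      sigma0InvOnRange_mul_sigma0_sq]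
  have hrange := Module.End.range_sq_eq_range_of_sq_mul_eq _ h₁
  have hinf := Module.End.range_inf_ker_eq_bot_of_mul_sq_eq _ h₂
  rw [Matrix.mulVecLin_pow]
  exact ⟨hrange, hinf, ⟨(Module.End.powDirectLimitEquivQuotKer hrange hinf).toAddEquiv⟩⟩
end
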